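/- Let X be a nonnegative random variable that is regularly varying with index α > 1, let K be an ℕ-valued integrable random variable (possibly dependent on X), and let (X_j)_{j≥1} be i.i.d. copies of X, independent of the pair (X, K). Define H := max(X, max_{1≤j≤K} X_j) (with the maximum over an empty index set equal to 0). Then P(H > x) / P(X > x) → 1 + E[K] as x → ∞; in particular H is regularly varying with index α. -/

import Mathlib

open MeasureTheory ProbabilityTheory Filter Topology Asymptotics

/-- `tailP P Z x = P(Z > x)` as a real number. -/
noncomputable def tailP {Ω : Type*} [MeasurableSpace Ω] (P : Measure Ω) (Z : Ω → ℝ) (x : ℝ) : ℝ :=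
  (P {ω | x < Z ω}).toReal

/-- A positive measurable function `L` is slowly varying if `L(cx)/L(x) → 1` for every `c > 0`. -/
def SlowlyVarying (L : ℝ → ℝ) : Prop :=
  (∀ x > 0, 0 < L x) ∧ ∀ c > 0, Tendsto (fun x => L (c * x) / L x) atTop (𝓝 1)

/-- A nonnegative random variable `Z` is regularly varying with index `α` if
`P(Z > x) = x^{-α} L(x)` for all `x > 0`, with `L` slowly varying. -/
def RegVarying {Ω : Type*} [MeasurableSpace Ω] (P : Measure Ω) (Z : Ω → ℝ) (α : ℝ) : Prop :=
  ∃ L : ℝ → ℝ, Measurable L ∧ SlowlyVarying L ∧ ∀ x > 0, tailP P Z x = x ^ (-α) * L x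

/-!
Conditionally on `(X, K)`, the independent copies give `P(H ≤ x) = E[1{X ≤ x} F(x)^K]`, where `F`
is the distribution function of `X`. Since `1 - F^K = (1 - F) ∑_{i<K} F^i`, this is the exact
identity `P(H > x) = P(X > x) (1 + E[1{X ≤ x} ∑_{i<K} F(x)^i])`, and by dominated convergence
(the sum is at most `K`) the bracket tends to `1 + E[K]`. A tail asymptotically proportional to a
regularly varying tail is regularly varying with the same index.
-/

open Set
open scoped ENNReal

lemma iSup_fin_le_iff_of_nonneg {k : ℕ} (f : ℕ → ℝ) {x : ℝ} (hx : 0 ≤ x) :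
    (⨆ j : Fin k, f j) ≤ x ↔ ∀ j < k, f j ≤ x :=
  ⟨fun h j hj => (le_ciSup (finite_range _).bddAbove (⟨j, hj⟩ : Fin k)).trans h,
    fun h => Real.iSup_le (fun j => h j j.2) hx⟩

section Tail

variable {Ω : Type*} [MeasurableSpace Ω] {P : Measure Ω}

lemma tailP_antitone [IsFiniteMeasure P] (Z : Ω → ℝ) : Antitone (tailP P Z) :=
  fun _ _ hab => ENNReal.toReal_mono (measure_ne_top _ _)
    (measure_mono fun _ hω => hab.trans_lt hω)

lemma tailP_eq_one_sub [IsProbabilityMeasure P] {Z : Ω → ℝ} {x : ℝ}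
    (hZx : MeasurableSet {ω | Z ω ≤ x}) : tailP P Z x = 1 - P.real {ω | Z ω ≤ x} := by
  rw [← probReal_compl_eq_one_sub hZx, tailP, ← measureReal_def]
  congr with ω
  simp

lemma tendsto_measureReal_preimage_Iic_atTop [IsProbabilityMeasure P] (X : Ω → ℝ) :
    Tendsto (fun x => P.real (X ⁻¹' Iic x)) atTop (𝓝 1) := by
  have h := tendsto_measure_iUnion_atTop (μ := P) (ι := ℝ) (s := fun x => X ⁻¹' Iic x)
    fun _ _ hab => preimage_mono (Iic_subset_Iic.2 hab)
  rw [← preimage_iUnion, iUnion_Iic, preimage_univ, measure_univ] at h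
  exact (ENNReal.tendsto_toReal ENNReal.one_ne_top).comp h

lemma RegVarying.tailP_pos {Z : Ω → ℝ} {α : ℝ} (hZ : RegVarying P Z α) {x : ℝ}
    (hx : 0 < x) : 0 < tailP P Z x := by
  obtain ⟨L, -, hL, hZL⟩ := hZ
  rw [hZL x hx]
  exact mul_pos (Real.rpow_pos_of_pos hx _) (hL.1 x hx)

theorem RegVarying.of_tendsto_tailP_div [IsFiniteMeasure P] {Y Z : Ω → ℝ} {α c : ℝ}
    (hZ : RegVarying P Z α) (hc : 0 < c)
    (h : Tendsto (fun x => tailP P Y x / tailP P Z x) atTop (𝓝 c)) : RegVarying P Y α := by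
  have hZpos : ∀ x > 0, 0 < tailP P Z x := fun x hx => hZ.tailP_pos hx
  -- `Y` has a positive tail far out, hence everywhere by monotonicity
  have hYpos : ∀ x > 0, 0 < tailP P Y x := by
    intro x hx
    obtain ⟨y, hyc, hxy⟩ :=
      ((h.eventually (lt_mem_nhds hc)).and (eventually_ge_atTop x)).exists
    exact ((div_pos_iff_of_pos_right (hZpos y (hx.trans_le hxy))).1 hyc).trans_le
      (tailP_antitone Y hxy)
  obtain ⟨L, hLm, ⟨hLpos, hLsv⟩, hZL⟩ := hZ
  refine ⟨fun x => L x * (tailP P Y x / tailP P Z x),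
    hLm.mul ((tailP_antitone Y).measurable.div (tailP_antitone Z).measurable),
    ⟨fun x hx => mul_pos (hLpos x hx) (div_pos (hYpos x hx) (hZpos x hx)), fun b hb => ?_⟩,
    fun x hx => ?_⟩
  · have hr := (h.comp (tendsto_id.const_mul_atTop hb)).div h hc.ne'
    rw [div_self hc.ne'] at hr
    refine (mul_one (1 : ℝ) ▸ (hLsv b hb).mul hr).congr fun x => ?_
    simp only [Function.comp_apply, id, Pi.div_apply, div_mul_div_comm]
  · rw [← mul_assoc, ← hZL x hx, mul_div_cancel₀ _ (hZpos x hx).ne']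

end Tail

lemma setOf_max_iSup_le_eq_iUnion {Ω : Type*} {X : Ω → ℝ} {K : Ω → ℕ} {Xs : ℕ → Ω → ℝ}
    {x : ℝ} (hx : 0 ≤ x) :
    {ω | max (X ω) (⨆ j : Fin (K ω), Xs j ω) ≤ x} =
      ⋃ k, X ⁻¹' Iic x ∩ K ⁻¹' {k} ∩ ⋂ j ∈ Finset.range k, Xs j ⁻¹' Iic x := by
  ext ω
  simp [iSup_fin_le_iff_of_nonneg (Xs · ω) hx]

section Cluster

variable {Ω : Type*} [MeasurableSpace Ω] {P : Measure Ω}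

lemma measure_preimage_inter_iInter_preimage_eq_mul_pow {β γ : Type*} [MeasurableSpace β]
    [MeasurableSpace γ] {V : Ω → γ} {X : Ω → β} {Xs : ℕ → Ω → β}
    (hiid : ∀ j, IdentDistrib (Xs j) X P P) (hXsind : iIndepFun Xs P)
    (hind : IndepFun V (fun ω j => Xs j ω) P) {s : Set β} (hs : MeasurableSet s) {t : Set γ}
    (ht : MeasurableSet t) (k : ℕ) :
    P (V ⁻¹' t ∩ ⋂ j ∈ Finset.range k, Xs j ⁻¹' s) = P (V ⁻¹' t) * P (X ⁻¹' s) ^ k := by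
  have hpre : ⋂ j ∈ Finset.range k, Xs j ⁻¹' s =
      (fun ω j => Xs j ω) ⁻¹' ⋂ j ∈ Finset.range k, Function.eval j ⁻¹' s := by
    ext; simp
  rw [hpre, indepFun_iff_measure_inter_preimage_eq_mul.1 hind _ _ ht
    (Finset.measurableSet_biInter _ fun j _ => measurable_pi_apply j hs), ← hpre,
    iIndepFun_iff_measure_inter_preimage_eq_mul.1 hXsind _ fun _ _ => hs]
  simp [fun j => (hiid j).measure_mem_eq hs]

variable {X : Ω → ℝ} {K : Ω → ℕ} {Xs : ℕ → Ω → ℝ}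

lemma setLIntegral_comp_nat_eq_tsum (hK : Measurable K) {A : Set Ω} (f : ℕ → ℝ≥0∞) :
    ∫⁻ ω in A, f (K ω) ∂P = ∑' k, f k * P (A ∩ K ⁻¹' {k}) := by
  rw [← lintegral_map (measurable_from_nat (f := f)) hK, lintegral_countable']
  refine tsum_congr fun k => ?_
  rw [Measure.map_apply hK (measurableSet_singleton k),
    Measure.restrict_apply (hK (measurableSet_singleton k)), inter_comm]

variable (hX : Measurable X) (hK : Measurable K) (hXs : ∀ j, Measurable (Xs j))
  (hiid : ∀ j, IdentDistrib (Xs j) X P P) (hXsind : iIndepFun Xs P)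
  (hind : IndepFun (fun ω => (X ω, K ω)) (fun ω j => Xs j ω) P)
include hX hK hXs

lemma measurableSet_max_iSup_le {x : ℝ} (hx : 0 ≤ x) :
    MeasurableSet {ω | max (X ω) (⨆ j : Fin (K ω), Xs j ω) ≤ x} := by
  rw [setOf_max_iSup_le_eq_iUnion hx]
  measurability

include hiid hXsind hind

lemma measure_max_iSup_le {x : ℝ} (hx : 0 ≤ x) :
    P {ω | max (X ω) (⨆ j : Fin (K ω), Xs j ω) ≤ x} =
      ∫⁻ ω in X ⁻¹' Iic x, P (X ⁻¹' Iic x) ^ K ω ∂P := by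
  rw [setOf_max_iSup_le_eq_iUnion hx, measure_iUnion, setLIntegral_comp_nat_eq_tsum hK]
  · refine tsum_congr fun k => ?_
    rw [← mk_preimage_prod, measure_preimage_inter_iInter_preimage_eq_mul_pow hiid hXsind hind
      measurableSet_Iic (measurableSet_Iic.prod (measurableSet_singleton k)), mul_comm]
  · exact fun k l hkl => disjoint_left.2 fun ω hk hl => hkl (hk.1.2.symm.trans hl.1.2)
  · exact fun k => by measurability

theorem tailP_max_iSup_eq [IsProbabilityMeasure P] {x : ℝ} (hx : 0 ≤ x) :
    tailP P (fun ω => max (X ω) (⨆ j : Fin (K ω), Xs j ω)) x =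
      tailP P X x *
        (1 + ∫ ω in X ⁻¹' Iic x, ∑ i ∈ Finset.range (K ω), P.real (X ⁻¹' Iic x) ^ i ∂P) := by
  set A := X ⁻¹' Iic x
  set q := P.real A
  have hKpow : Measurable fun ω => q ^ K ω := measurable_from_nat.comp hK
  have hle :
      P.real {ω | max (X ω) (⨆ j : Fin (K ω), Xs j ω) ≤ x} = ∫ ω in A, q ^ K ω ∂P := by
    rw [measureReal_def, measure_max_iSup_le hX hK hXs hiid hXsind hind hx,
      ← integral_toReal (f := fun ω => P A ^ K ω) (measurable_from_nat.comp hK).aemeasurable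
        (ae_of_all _ fun _ => ENNReal.pow_lt_top (measure_lt_top _ _))]
    simp only [ENNReal.toReal_pow, q, measureReal_def, A]
  have hsub : ∫ ω in A, (1 - q ^ K ω) ∂P = q - ∫ ω in A, q ^ K ω ∂P := by
    have hint : IntegrableOn (fun ω => q ^ K ω) A P := Integrable.of_bound
      hKpow.aestronglyMeasurable 1 (ae_of_all _ fun ω => by
        rw [norm_pow, Real.norm_of_nonneg measureReal_nonneg]
        exact pow_le_one₀ measureReal_nonneg measureReal_le_one)
    rw [integral_sub (integrable_const 1) hint, setIntegral_const, smul_eq_mul, mul_one]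
  have hgeom : ∫ ω in A, (1 - q ^ K ω) ∂P =
      (1 - q) * ∫ ω in A, ∑ i ∈ Finset.range (K ω), q ^ i ∂P := by
    simp_rw [← integral_const_mul, mul_neg_geom_sum]
  rw [tailP_eq_one_sub (measurableSet_max_iSup_le hX hK hXs hx),
    tailP_eq_one_sub (hX measurableSet_Iic), hle]
  show 1 - _ = (1 - q) * _
  linear_combination hgeom - hsub

end Cluster

lemma tendsto_setIntegral_preimage_Iic_geom_sum {Ω : Type*} [MeasurableSpace Ω]
    {μ : Measure Ω} {X : Ω → ℝ} {K : Ω → ℕ} {q : ℝ → ℝ} (hX : Measurable X) (hK : Measurable K)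
    (hKint : Integrable (fun ω => (K ω : ℝ)) μ) (hq0 : ∀ x, 0 ≤ q x) (hq1 : ∀ x, q x ≤ 1)
    (hq : Tendsto q atTop (𝓝 1)) :
    Tendsto (fun x => ∫ ω in X ⁻¹' Iic x, ∑ i ∈ Finset.range (K ω), q x ^ i ∂μ) atTop
      (𝓝 (∫ ω, (K ω : ℝ) ∂μ)) := by
  simp_rw [← integral_indicator (hX measurableSet_Iic)]
  have hmeas (x : ℝ) : Measurable fun ω => ∑ i ∈ Finset.range (K ω), q x ^ i :=
    (measurable_from_nat (f := fun k => ∑ i ∈ Finset.range k, q x ^ i)).comp hK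
  refine tendsto_integral_filter_of_dominated_convergence _
    (.of_forall fun x => ((hmeas x).indicator (hX measurableSet_Iic)).aestronglyMeasurable)
    (.of_forall fun x => ae_of_all _ fun ω => (norm_indicator_le_norm_self _ _).trans ?_) hKint
    (ae_of_all _ fun ω => ?_)
  · calc ‖∑ i ∈ Finset.range (K ω), q x ^ i‖ ≤ ∑ i ∈ Finset.range (K ω), ‖q x ^ i‖ :=
          norm_sum_le _ _
      _ ≤ ∑ i ∈ Finset.range (K ω), 1 := Finset.sum_le_sum fun i _ => by
        rw [norm_pow, Real.norm_of_nonneg (hq0 x)]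
        exact pow_le_one₀ (hq0 x) (hq1 x)
      _ = K ω := by simp
  · have hsum : Tendsto (fun x => ∑ i ∈ Finset.range (K ω), q x ^ i) atTop (𝓝 (K ω : ℝ)) := by
      simpa using tendsto_finsetSum (Finset.range (K ω)) fun i _ => hq.pow i
    refine hsum.congr' ?_
    filter_upwards [eventually_ge_atTop (X ω)] with x hx
    exact (indicator_of_mem (show ω ∈ X ⁻¹' Iic x from hx)
      fun ω => ∑ i ∈ Finset.range (K ω), q x ^ i).symm

theorem tail_max_renewal_cluster_general
    {Ω : Type*} [MeasurableSpace Ω] (P : Measure Ω) [IsProbabilityMeasure P]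
    (α : ℝ)
    (X : Ω → ℝ) (K : Ω → ℕ) (Xs : ℕ → Ω → ℝ)
    (hXmeas : Measurable X) (hKmeas : Measurable K) (hXsmeas : ∀ j, Measurable (Xs j))
    (hXrv : RegVarying P X α)
    (hKint : Integrable (fun ω => (K ω : ℝ)) P)
    (hiid : ∀ j, IdentDistrib (Xs j) X P P)
    (hXsind : iIndepFun Xs P)
    (hind2 : IndepFun (fun ω => (X ω, K ω)) (fun ω j => Xs j ω) P)
    (H : Ω → ℝ)
    (hH : ∀ ω, H ω = max (X ω) (⨆ j : Fin (K ω), Xs (j : ℕ) ω)) :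
    Tendsto (fun x => tailP P H x / tailP P X x) atTop
      (𝓝 (1 + ∫ ω, (K ω : ℝ) ∂P)) ∧
    RegVarying P H α := by
  have hratio : Tendsto (fun x => tailP P H x / tailP P X x) atTop
      (𝓝 (1 + ∫ ω, (K ω : ℝ) ∂P)) := by
    refine (tendsto_const_nhds.add (tendsto_setIntegral_preimage_Iic_geom_sum hXmeas hKmeas hKint
      (fun _ => measureReal_nonneg) (fun _ => measureReal_le_one (μ := P))
      (tendsto_measureReal_preimage_Iic_atTop X))).congr' ?_
    filter_upwards [eventually_gt_atTop 0] with x hx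
    rw [funext hH, tailP_max_iSup_eq hXmeas hKmeas hXsmeas hiid hXsind hind2 hx.le,
      mul_div_cancel_left₀ _ (hXrv.tailP_pos hx).ne']
  have hlimit_pos : 0 < 1 + ∫ ω, (K ω : ℝ) ∂P :=
    add_pos_of_pos_of_nonneg one_pos (integral_nonneg fun _ => Nat.cast_nonneg _)
  exact ⟨hratio, hXrv.of_tendsto_tailP_div hlimit_pos hratio⟩

/-- Tail asymptotics for the maximum of the marks of a generic cluster in the renewal
Poisson cluster process: `P(H > x) ∼ (1 + E[K]) P(X > x)`, and `H` is regularly varying. -/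
theorem tail_max_renewal_cluster
    {Ω : Type*} [MeasurableSpace Ω] (P : Measure Ω) [IsProbabilityMeasure P]
    (α : ℝ) (hα : 1 < α)
    (X : Ω → ℝ) (K : Ω → ℕ) (Xs : ℕ → Ω → ℝ)
    (hXmeas : Measurable X) (hKmeas : Measurable K) (hXsmeas : ∀ j, Measurable (Xs j))
    (hXnn : ∀ ω, 0 ≤ X ω)
    (hXrv : RegVarying P X α)
    (hKint : Integrable (fun ω => (K ω : ℝ)) P)
    (hiid : ∀ j, IdentDistrib (Xs j) X P P)
    (hXsind : iIndepFun Xs P)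
    (hind2 : IndepFun (fun ω => (X ω, K ω)) (fun ω j => Xs j ω) P)
    (H : Ω → ℝ)
    (hH : ∀ ω, H ω = max (X ω) (⨆ j : Fin (K ω), Xs (j : ℕ) ω)) :
    Tendsto (fun x => tailP P H x / tailP P X x) atTop
      (𝓝 (1 + ∫ ω, (K ω : ℝ) ∂P)) ∧
    RegVarying P H α :=
  tail_max_renewal_cluster_general P α X K Xs hXmeas hKmeas hXsmeas hXrv hKint hiid hXsind hind2 H
    hH
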